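/- Let Q be a quiver with finite vertex set V, let R₁ ⊂ V be a nonempty proper subset and R₂ = V ∖ R₁. Let θ₀ : V → ℝ be a stability parameter that is generic on the wall W_{R₁}, i.e. θ₀(χ_{R₁}) = 0 and for every nonempty proper subset R ⊂ V with θ₀(χ_R) = 0 one has R = R₁ or R = R₂. Let S and Q' be θ₀-stable representations of Q over ℂ with dimension vectors χ_{R₁} and χ_{R₂} respectively. Let θ : V → ℝ be a stability parameter with θ(χ_{R₁}) > 0 and such that θ(χ_R) > 0 for every nonempty proper subset R ⊂ V with θ₀(χ_R) > 0. Then for every short exact sequence of representations 0 → S → E → Q' → 0 that does not split, the representation E (which has dimension vector (1,…,1)) is θ-stable. -/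

import Mathlib

/-!
A θ₀-stable representation `M` with `θ₀(M) = 0` is θ₀-semistable, and θ₀ vanishes only on
its trivial subrepresentations. For a subrepresentation `N ⊆ E` the dimension vector splits
as `dim N = dim (N ∩ S) + dim p(N)`, so `θ₀(N) ≥ 0`. Since `E` is thin, `θ(N) = θ(χ_R)` for
the support `R` of `N`, so `θ₀(N) > 0` gives `θ(N) > 0` by the choice of `θ`. If `θ₀(N) = 0`,
then `N ∩ S` and `p(N)` are each zero or everything: `N ∩ S = 0` with `p(N) = Q'` would split
the sequence, and the other mixed case is `N = S`, where `θ(N) = θ(χ_{R₁}) > 0`.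
-/

/-- `N` is a subrepresentation of the representation `(M, ψ)` of the quiver with
arrows `a : Ar` having source `s a` and target `t a`. -/
def IsSubrep {V Ar : Type} (s t : Ar → V)
    (M : V → Type) [∀ v, AddCommGroup (M v)] [∀ v, Module ℂ (M v)]
    (ψ : ∀ a, M (s a) →ₗ[ℂ] M (t a))
    (N : ∀ v, Submodule ℂ (M v)) : Prop :=
  ∀ a : Ar, ∀ x ∈ N (s a), ψ a x ∈ N (t a)

/-- `θ(N) = ∑_{v ∈ V} θ(v) · dim N_v`. -/
noncomputable def thetaVal {V : Type} [Fintype V] (θ : V → ℝ)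
    {M : V → Type} [∀ v, AddCommGroup (M v)] [∀ v, Module ℂ (M v)]
    (N : ∀ v, Submodule ℂ (M v)) : ℝ :=
  ∑ v, θ v * (Module.finrank ℂ (N v) : ℝ)

namespace Submodule

variable {K A B C : Type*} [DivisionRing K] [AddCommGroup A] [Module K A] [AddCommGroup B]
  [Module K B] [AddCommGroup C] [Module K C] {f : A →ₗ[K] B} {g : B →ₗ[K] C}

theorem eq_bot_of_comap_eq_bot_of_map_eq_bot (hfg : LinearMap.ker g = LinearMap.range f)
    {N : Submodule K B} (hcomap : N.comap f = ⊥) (hmap : N.map g = ⊥) : N = ⊥ := by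
  have hle : N ≤ LinearMap.range f := hfg ▸ LinearMap.le_ker_iff_map.mpr hmap
  rw [← inf_eq_right.mpr hle, ← map_comap_eq, hcomap, map_bot]

theorem eq_top_of_comap_eq_top_of_map_eq_top (hfg : LinearMap.ker g = LinearMap.range f)
    {N : Submodule K B} (hcomap : N.comap f = ⊤) (hmap : N.map g = ⊤) : N = ⊤ := by
  have hle : LinearMap.ker g ≤ N := hfg ▸ LinearMap.range_le_iff_comap.mpr hcomap
  rw [← sup_eq_left.mpr hle, ← comap_map_eq, hmap, comap_top]

theorem finrank_eq_finrank_comap_add_finrank_map [FiniteDimensional K B]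
    (hf : Function.Injective f) (hfg : LinearMap.ker g = LinearMap.range f) (N : Submodule K B) :
    Module.finrank K N = Module.finrank K (N.comap f) + Module.finrank K (N.map g) := by
  have hker : Module.finrank K (LinearMap.ker (g.domRestrict N)) =
      Module.finrank K (N.comap f) := by
    rw [LinearMap.ker_domRestrict, ← finrank_map_subtype_eq, map_comap_subtype, hfg,
      inf_comm, ← map_comap_eq, LinearEquiv.finrank_eq (equivMapOfInjective f hf _).symm]
  rw [← (g.domRestrict N).finrank_range_add_finrank_ker, LinearMap.range_domRestrict, hker,
    add_comm]

theorem eq_bot_or_eq_top_of_finrank_eq_one (hB : Module.finrank K B = 1) (N : Submodule K B) :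
    N = ⊥ ∨ N = ⊤ :=
  have := isSimpleModule_iff_finrank_eq_one.mpr hB
  eq_bot_or_eq_top N

theorem injOn_of_comap_eq_bot (hfg : LinearMap.ker g = LinearMap.range f) {N : Submodule K B}
    (hN : N.comap f = ⊥) : Set.InjOn g N := by
  intro x hx y hy hxy
  obtain ⟨z, hz⟩ : x - y ∈ LinearMap.range f := by
    rw [← hfg, LinearMap.mem_ker, map_sub, hxy, sub_self]
  have hz0 : z ∈ N.comap f := by rw [mem_comap, hz]; exact N.sub_mem hx hy
  rw [hN, mem_bot] at hz0
  rw [← sub_eq_zero, ← hz, hz0, map_zero]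

theorem exists_section_of_comap_eq_bot_of_map_eq_top (hfg : LinearMap.ker g = LinearMap.range f)
    {N : Submodule K B} (hbot : N.comap f = ⊥) (htop : N.map g = ⊤) :
    ∃ σ : C →ₗ[K] B, (∀ x, σ x ∈ N) ∧ g.comp σ = LinearMap.id := by
  have hbij : Function.Bijective (g.domRestrict N) :=
    ⟨fun x y h => Subtype.ext (injOn_of_comap_eq_bot hfg hbot x.2 y.2 h),
      LinearMap.range_eq_top.mp (by rw [LinearMap.range_domRestrict, htop])⟩
  refine ⟨N.subtype.comp (LinearEquiv.ofBijective _ hbij).symm.toLinearMap,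
    fun x => Subtype.prop _, LinearMap.ext fun x => ?_⟩
  exact (LinearEquiv.ofBijective _ hbij).apply_symm_apply x

end Submodule

section Representations

variable {V Ar : Type} (s t : Ar → V)

def IsRepHom {M M' : V → Type} [∀ v, AddCommGroup (M v)] [∀ v, Module ℂ (M v)]
    [∀ v, AddCommGroup (M' v)] [∀ v, Module ℂ (M' v)]
    (ψ : ∀ a, M (s a) →ₗ[ℂ] M (t a)) (ψ' : ∀ a, M' (s a) →ₗ[ℂ] M' (t a))
    (f : ∀ v, M v →ₗ[ℂ] M' v) : Prop :=
  ∀ (a : Ar) (x : M (s a)), f (t a) (ψ a x) = ψ' a (f (s a) x)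

def IsThetaStable [Fintype V] (θ : V → ℝ) (M : V → Type) [∀ v, AddCommGroup (M v)]
    [∀ v, Module ℂ (M v)] (ψ : ∀ a, M (s a) →ₗ[ℂ] M (t a)) : Prop :=
  ∀ N : ∀ v, Submodule ℂ (M v), IsSubrep s t M ψ N →
    (∃ v, N v ≠ ⊥) → (∃ v, N v ≠ ⊤) → 0 < thetaVal θ N

variable {s t} {M M' : V → Type} [∀ v, AddCommGroup (M v)] [∀ v, Module ℂ (M v)]
  [∀ v, AddCommGroup (M' v)] [∀ v, Module ℂ (M' v)]
  {ψ : ∀ a, M (s a) →ₗ[ℂ] M (t a)} {ψ' : ∀ a, M' (s a) →ₗ[ℂ] M' (t a)}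

theorem IsSubrep.comap {N : ∀ v, Submodule ℂ (M' v)} (hN : IsSubrep s t M' ψ' N)
    {f : ∀ v, M v →ₗ[ℂ] M' v} (hf : IsRepHom s t ψ ψ' f) :
    IsSubrep s t M ψ fun v => (N v).comap (f v) := by
  intro a x hx
  rw [Submodule.mem_comap, hf]
  exact hN a _ hx

theorem IsSubrep.map {N : ∀ v, Submodule ℂ (M v)} (hN : IsSubrep s t M ψ N)
    {f : ∀ v, M v →ₗ[ℂ] M' v} (hf : IsRepHom s t ψ ψ' f) :
    IsSubrep s t M' ψ' fun v => (N v).map (f v) := by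
  rintro a _ ⟨x, hx, rfl⟩
  exact ⟨ψ a x, hN a x hx, hf a x⟩

section thetaVal

variable [Fintype V] (θ : V → ℝ)

@[simp]
theorem thetaVal_bot : thetaVal θ (⊥ : ∀ v, Submodule ℂ (M v)) = 0 := by
  simp [thetaVal]

theorem thetaVal_top_of_finrank_eq_indicator [DecidableEq V] {R : Finset V}
    (hM : ∀ v, Module.finrank ℂ (M v) = if v ∈ R then 1 else 0) :
    thetaVal θ (⊤ : ∀ v, Submodule ℂ (M v)) = ∑ v ∈ R, θ v := by
  simp [thetaVal, hM, Finset.sum_ite_mem]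

open Classical in
noncomputable def vertexSupport (N : ∀ v, Submodule ℂ (M v)) : Finset V :=
  Finset.univ.filter fun v => N v ≠ ⊥

theorem mem_vertexSupport {N : ∀ v, Submodule ℂ (M v)} {v : V} :
    v ∈ vertexSupport N ↔ N v ≠ ⊥ := by
  simp [vertexSupport]

theorem vertexSupport_nonempty {N : ∀ v, Submodule ℂ (M v)} (hN : ∃ v, N v ≠ ⊥) :
    (vertexSupport N).Nonempty :=
  let ⟨v, hv⟩ := hN; ⟨v, mem_vertexSupport.mpr hv⟩

variable (hM : ∀ v, Module.finrank ℂ (M v) = 1)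
include hM

theorem vertexSupport_ne_univ {N : ∀ v, Submodule ℂ (M v)} (hN : ∃ v, N v ≠ ⊤) :
    vertexSupport N ≠ Finset.univ := by
  obtain ⟨v, hv⟩ := hN
  intro h
  have := mem_vertexSupport.mp (h ▸ Finset.mem_univ v)
  exact hv ((Submodule.eq_bot_or_eq_top_of_finrank_eq_one (hM v) (N v)).resolve_left this)

theorem thetaVal_eq_sum_vertexSupport (N : ∀ v, Submodule ℂ (M v)) :
    thetaVal θ N = ∑ v ∈ vertexSupport N, θ v := by
  rw [thetaVal, vertexSupport, Finset.sum_filter]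
  refine Finset.sum_congr rfl fun v _ => ?_
  by_cases hbot : N v = ⊥
  · rw [if_neg (not_not.mpr hbot), hbot, finrank_bot, Nat.cast_zero, mul_zero]
  · have htop := (Submodule.eq_bot_or_eq_top_of_finrank_eq_one (hM v) (N v)).resolve_left hbot
    rw [if_pos hbot, htop, finrank_top, hM, Nat.cast_one, mul_one]

end thetaVal

namespace IsThetaStable

variable [Fintype V] {θ : V → ℝ} (hM : IsThetaStable s t θ M ψ)
  (htop : thetaVal θ (⊤ : ∀ v, Submodule ℂ (M v)) = 0)
  {N : ∀ v, Submodule ℂ (M v)} (hN : IsSubrep s t M ψ N)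
include hM hN

theorem eq_bot_or_eq_top_or_pos : N = ⊥ ∨ N = ⊤ ∨ 0 < thetaVal θ N := by
  by_contra! h
  refine h.2.2.not_gt (hM N hN ?_ ?_)
  · exact Function.ne_iff.mp h.1
  · exact Function.ne_iff.mp h.2.1

theorem eq_bot_or_eq_top_of_thetaVal_eq_zero (h : thetaVal θ N = 0) : N = ⊥ ∨ N = ⊤ :=
  (hM.eq_bot_or_eq_top_or_pos hN).imp_right fun h' => h'.resolve_right fun hpos => hpos.ne' h

include htop in
theorem thetaVal_nonneg : 0 ≤ thetaVal θ N := by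
  rcases hM.eq_bot_or_eq_top_or_pos hN with rfl | rfl | h
  · simp
  · exact htop.ge
  · exact h.le

end IsThetaStable

section Extension

variable {MS ME MQ : V → Type}
  [∀ v, AddCommGroup (MS v)] [∀ v, Module ℂ (MS v)]
  [∀ v, AddCommGroup (ME v)] [∀ v, Module ℂ (ME v)]
  [∀ v, AddCommGroup (MQ v)] [∀ v, Module ℂ (MQ v)]
  {ψS : ∀ a, MS (s a) →ₗ[ℂ] MS (t a)} {ψE : ∀ a, ME (s a) →ₗ[ℂ] ME (t a)}
  {ψQ : ∀ a, MQ (s a) →ₗ[ℂ] MQ (t a)}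
  {i : ∀ v, MS v →ₗ[ℂ] ME v} {p : ∀ v, ME v →ₗ[ℂ] MQ v}
  (hexact : ∀ v, LinearMap.ker (p v) = LinearMap.range (i v))
include hexact

theorem thetaVal_eq_thetaVal_comap_add_thetaVal_map [Fintype V]
    [∀ v, FiniteDimensional ℂ (ME v)] (hi : ∀ v, Function.Injective (i v)) (θ : V → ℝ)
    (N : ∀ v, Submodule ℂ (ME v)) :
    thetaVal θ N =
      thetaVal θ (fun v => (N v).comap (i v)) + thetaVal θ (fun v => (N v).map (p v)) := by
  simp only [thetaVal, ← Finset.sum_add_distrib, ← mul_add, ← Nat.cast_add,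
    ← Submodule.finrank_eq_finrank_comap_add_finrank_map (hi _) (hexact _)]

theorem exists_rep_section_of_comap_eq_bot_of_map_eq_top (hp : IsRepHom s t ψE ψQ p)
    {N : ∀ v, Submodule ℂ (ME v)} (hN : IsSubrep s t ME ψE N)
    (hbot : (fun v => (N v).comap (i v)) = ⊥) (htop : (fun v => (N v).map (p v)) = ⊤) :
    ∃ σ : ∀ v, MQ v →ₗ[ℂ] ME v, IsRepHom s t ψQ ψE σ ∧ ∀ v, (p v).comp (σ v) = LinearMap.id := by
  choose σ hσN hσ using fun v =>
    Submodule.exists_section_of_comap_eq_bot_of_map_eq_top (hexact v) (congrFun hbot v)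
      (congrFun htop v)
  refine ⟨σ, fun a x => ?_, hσ⟩
  -- both sides lie in `N (t a)`, on which `p` is injective, and both map to `ψQ a x`
  refine Submodule.injOn_of_comap_eq_bot (hexact _) (congrFun hbot _) (hσN _ _)
    (hN a _ (hσN _ _)) ?_
  rw [← LinearMap.comp_apply, hσ, hp, ← LinearMap.comp_apply (p _), hσ]
  rfl

theorem comap_eq_top_and_map_eq_bot_of_thetaVal_nonpos [Fintype V]
    [∀ v, FiniteDimensional ℂ (ME v)] {θ : V → ℝ}
    (hS : IsThetaStable s t θ MS ψS) (hSθ : thetaVal θ (⊤ : ∀ v, Submodule ℂ (MS v)) = 0)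
    (hQ : IsThetaStable s t θ MQ ψQ) (hQθ : thetaVal θ (⊤ : ∀ v, Submodule ℂ (MQ v)) = 0)
    (hi : IsRepHom s t ψS ψE i) (hp : IsRepHom s t ψE ψQ p)
    (hiinj : ∀ v, Function.Injective (i v))
    (hnonsplit : ¬ ∃ σ : ∀ v, MQ v →ₗ[ℂ] ME v,
      IsRepHom s t ψQ ψE σ ∧ ∀ v, (p v).comp (σ v) = LinearMap.id)
    {N : ∀ v, Submodule ℂ (ME v)} (hN : IsSubrep s t ME ψE N) (hNbot : ∃ v, N v ≠ ⊥)
    (hNtop : ∃ v, N v ≠ ⊤) (hθN : thetaVal θ N ≤ 0) :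
    (fun v => (N v).comap (i v)) = ⊤ ∧ (fun v => (N v).map (p v)) = ⊥ := by
  have hNS := hN.comap hi
  have hNQ := hN.map hp
  have hSnonneg := hS.thetaVal_nonneg hSθ hNS
  have hQnonneg := hQ.thetaVal_nonneg hQθ hNQ
  rw [thetaVal_eq_thetaVal_comap_add_thetaVal_map hexact hiinj] at hθN
  rcases hS.eq_bot_or_eq_top_of_thetaVal_eq_zero hNS (by linarith) with hNS | hNS <;>
  rcases hQ.eq_bot_or_eq_top_of_thetaVal_eq_zero hNQ (by linarith) with hNQ | hNQ
  · exact absurd (funext fun v => Submodule.eq_bot_of_comap_eq_bot_of_map_eq_bot (hexact v)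
      (congrFun hNS v) (congrFun hNQ v)) (Function.ne_iff.mpr hNbot)
  · exact (hnonsplit (exists_rep_section_of_comap_eq_bot_of_map_eq_top hexact hp hN hNS hNQ)).elim
  · exact ⟨hNS, hNQ⟩
  · exact absurd (funext fun v => Submodule.eq_top_of_comap_eq_top_of_map_eq_top (hexact v)
      (congrFun hNS v) (congrFun hNQ v)) (Function.ne_iff.mpr hNtop)

end Extension

end Representations

theorem nonsplit_extension_is_stable_general
    {V Ar : Type} [Fintype V] [DecidableEq V] (s t : Ar → V)
    (R₁ : Finset V)
    (θ₀ θ : V → ℝ)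
    (hθ₀sum : ∑ v, θ₀ v = 0)
    (hθ₀wall : ∑ v ∈ R₁, θ₀ v = 0)
    (hθR₁ : 0 < ∑ v ∈ R₁, θ v)
    (hθadj : ∀ R : Finset V, R.Nonempty → R ≠ Finset.univ →
      0 < ∑ v ∈ R, θ₀ v → 0 < ∑ v ∈ R, θ v)
    (MS ME MQ : V → Type)
    [∀ v, AddCommGroup (MS v)] [∀ v, Module ℂ (MS v)]
    [∀ v, AddCommGroup (ME v)] [∀ v, Module ℂ (ME v)]
    [∀ v, FiniteDimensional ℂ (ME v)]
    [∀ v, AddCommGroup (MQ v)] [∀ v, Module ℂ (MQ v)]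
    (ψS : ∀ a, MS (s a) →ₗ[ℂ] MS (t a))
    (ψE : ∀ a, ME (s a) →ₗ[ℂ] ME (t a))
    (ψQ : ∀ a, MQ (s a) →ₗ[ℂ] MQ (t a))
    (hSdim : ∀ v, Module.finrank ℂ (MS v) = if v ∈ R₁ then 1 else 0)
    (hQdim : ∀ v, Module.finrank ℂ (MQ v) = if v ∈ R₁ then 0 else 1)
    (hSstable : ∀ N : ∀ v, Submodule ℂ (MS v), IsSubrep s t MS ψS N →
      (∃ v, N v ≠ ⊥) → (∃ v, N v ≠ ⊤) → 0 < thetaVal θ₀ N)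
    (hQstable : ∀ N : ∀ v, Submodule ℂ (MQ v), IsSubrep s t MQ ψQ N →
      (∃ v, N v ≠ ⊥) → (∃ v, N v ≠ ⊤) → 0 < thetaVal θ₀ N)
    (i : ∀ v, MS v →ₗ[ℂ] ME v) (p : ∀ v, ME v →ₗ[ℂ] MQ v)
    (hi : ∀ (a : Ar) (x : MS (s a)), i (t a) (ψS a x) = ψE a (i (s a) x))
    (hp : ∀ (a : Ar) (x : ME (s a)), p (t a) (ψE a x) = ψQ a (p (s a) x))
    (hiinj : ∀ v, Function.Injective (i v))
    (hpsurj : ∀ v, Function.Surjective (p v))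
    (hexact : ∀ v, LinearMap.ker (p v) = LinearMap.range (i v))
    (hnonsplit : ¬ ∃ σ : ∀ v, MQ v →ₗ[ℂ] ME v,
      (∀ (a : Ar) (x : MQ (s a)), σ (t a) (ψQ a x) = ψE a (σ (s a) x)) ∧
      ∀ v, (p v).comp (σ v) = LinearMap.id) :
    (∀ v, Module.finrank ℂ (ME v) = 1) ∧
    ∀ N : ∀ v, Submodule ℂ (ME v), IsSubrep s t ME ψE N →
      (∃ v, N v ≠ ⊥) → (∃ v, N v ≠ ⊤) → 0 < thetaVal θ N := by
  have hEdim : ∀ v, Module.finrank ℂ (ME v) = 1 := by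
    intro v
    have := Submodule.finrank_eq_finrank_comap_add_finrank_map (hiinj v) (hexact v) ⊤
    rw [Submodule.comap_top, Submodule.map_top, LinearMap.range_eq_top.mpr (hpsurj v),
      finrank_top, finrank_top, finrank_top, hSdim, hQdim] at this
    split_ifs at this <;> exact this
  refine ⟨hEdim, fun N hN hNbot hNtop => ?_⟩
  by_cases hpos : 0 < thetaVal θ₀ N
  · rw [thetaVal_eq_sum_vertexSupport θ₀ hEdim] at hpos
    rw [thetaVal_eq_sum_vertexSupport θ hEdim]
    exact hθadj _ (vertexSupport_nonempty hNbot) (vertexSupport_ne_univ hEdim hNtop) hpos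
  have hSθ₀ : thetaVal θ₀ (⊤ : ∀ v, Submodule ℂ (MS v)) = 0 := by
    rw [thetaVal_top_of_finrank_eq_indicator θ₀ hSdim, hθ₀wall]
  have hQθ₀ : thetaVal θ₀ (⊤ : ∀ v, Submodule ℂ (MQ v)) = 0 := by
    rw [thetaVal_top_of_finrank_eq_indicator θ₀ (R := R₁ᶜ) (by simpa [ite_not] using hQdim)]
    linarith [Finset.sum_compl_add_sum R₁ θ₀]
  obtain ⟨hNS, hNQ⟩ := comap_eq_top_and_map_eq_bot_of_thetaVal_nonpos hexact hSstable hSθ₀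
    hQstable hQθ₀ hi hp hiinj hnonsplit hN hNbot hNtop (not_lt.mp hpos)
  rw [thetaVal_eq_thetaVal_comap_add_thetaVal_map hexact hiinj, hNS, hNQ, thetaVal_bot, add_zero,
    thetaVal_top_of_finrank_eq_indicator θ hSdim]
  exact hθR₁

/-- Let `θ₀` be a stability parameter generic on the wall `W_{R₁}`, let `S` and
`Q'` be `θ₀`-stable representations of dimension vectors `χ_{R₁}` and `χ_{R₂}`
(`R₂ = V ∖ R₁`), and let `θ` be a stability parameter with `θ(χ_{R₁}) > 0` which
is positive on every characteristic function on which `θ₀` is positive.  Then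
every non-split extension `0 → S → E → Q' → 0` yields a `θ`-stable
representation `E` of dimension vector `(1,…,1)`. -/
theorem nonsplit_extension_is_stable
    {V Ar : Type} [Fintype V] [DecidableEq V] (s t : Ar → V)
    (R₁ : Finset V) (hR₁ne : R₁.Nonempty) (hR₁prop : R₁ ≠ Finset.univ)
    (θ₀ θ : V → ℝ)
    (hθ₀sum : ∑ v, θ₀ v = 0)
    (hθ₀wall : ∑ v ∈ R₁, θ₀ v = 0)
    (hθ₀gen : ∀ R : Finset V, R.Nonempty → R ≠ Finset.univ →
      ∑ v ∈ R, θ₀ v = 0 → R = R₁ ∨ R = R₁ᶜ)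
    (hθsum : ∑ v, θ v = 0)
    (hθR₁ : 0 < ∑ v ∈ R₁, θ v)
    (hθadj : ∀ R : Finset V, R.Nonempty → R ≠ Finset.univ →
      0 < ∑ v ∈ R, θ₀ v → 0 < ∑ v ∈ R, θ v)
    (MS ME MQ : V → Type)
    [∀ v, AddCommGroup (MS v)] [∀ v, Module ℂ (MS v)]
    [∀ v, FiniteDimensional ℂ (MS v)]
    [∀ v, AddCommGroup (ME v)] [∀ v, Module ℂ (ME v)]
    [∀ v, FiniteDimensional ℂ (ME v)]
    [∀ v, AddCommGroup (MQ v)] [∀ v, Module ℂ (MQ v)]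
    [∀ v, FiniteDimensional ℂ (MQ v)]
    (ψS : ∀ a, MS (s a) →ₗ[ℂ] MS (t a))
    (ψE : ∀ a, ME (s a) →ₗ[ℂ] ME (t a))
    (ψQ : ∀ a, MQ (s a) →ₗ[ℂ] MQ (t a))
    (hSdim : ∀ v, Module.finrank ℂ (MS v) = if v ∈ R₁ then 1 else 0)
    (hQdim : ∀ v, Module.finrank ℂ (MQ v) = if v ∈ R₁ then 0 else 1)
    (hSstable : ∀ N : ∀ v, Submodule ℂ (MS v), IsSubrep s t MS ψS N →
      (∃ v, N v ≠ ⊥) → (∃ v, N v ≠ ⊤) → 0 < thetaVal θ₀ N)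
    (hQstable : ∀ N : ∀ v, Submodule ℂ (MQ v), IsSubrep s t MQ ψQ N →
      (∃ v, N v ≠ ⊥) → (∃ v, N v ≠ ⊤) → 0 < thetaVal θ₀ N)
    (i : ∀ v, MS v →ₗ[ℂ] ME v) (p : ∀ v, ME v →ₗ[ℂ] MQ v)
    (hi : ∀ (a : Ar) (x : MS (s a)), i (t a) (ψS a x) = ψE a (i (s a) x))
    (hp : ∀ (a : Ar) (x : ME (s a)), p (t a) (ψE a x) = ψQ a (p (s a) x))
    (hiinj : ∀ v, Function.Injective (i v))
    (hpsurj : ∀ v, Function.Surjective (p v))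
    (hexact : ∀ v, LinearMap.ker (p v) = LinearMap.range (i v))
    (hnonsplit : ¬ ∃ σ : ∀ v, MQ v →ₗ[ℂ] ME v,
      (∀ (a : Ar) (x : MQ (s a)), σ (t a) (ψQ a x) = ψE a (σ (s a) x)) ∧
      ∀ v, (p v).comp (σ v) = LinearMap.id) :
    (∀ v, Module.finrank ℂ (ME v) = 1) ∧
    ∀ N : ∀ v, Submodule ℂ (ME v), IsSubrep s t ME ψE N →
      (∃ v, N v ≠ ⊥) → (∃ v, N v ≠ ⊤) → 0 < thetaVal θ N :=
  nonsplit_extension_is_stable_general s t R₁ θ₀ θ hθ₀sum hθ₀wall hθR₁ hθadj MS ME MQ ψS ψE ψQ hSdim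
    hQdim hSstable hQstable i p hi hp hiinj hpsurj hexact hnonsplit
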